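/- Let D u = Σ_{j=0}^n λ_j(x) e_j ∂_j u with real-valued C¹ coefficients, λ_0 ≠ 0, β_i := λ_i/λ_0, and let F u = Σ_{i=0}^n A^{(i)}(x) ∂_i u with real-valued C¹ coefficients A^{(i)}. For any C² function u with Du = 0, one has the identity D(F u) = Σ_{i=1}^n (D A^{(i)} − (D A^{(0)}) β_i e_i) ∂_i u − Σ_{i=1}^n Σ_{j=0}^n A^{(j)}(x) λ_0 ∂_j(β_i) e_i ∂_i u, i.e., D(Fu) is a linear combination of first-order derivatives of u only. -/

import Mathlib

/-!
Differentiating the relation `Σₖ λₖ eₖ ∂ₖu = 0` in `xⱼ` and commuting second derivatives gives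
`D(∂ⱼu) = -Σₖ (∂ⱼλₖ) eₖ ∂ₖu`, so the Leibniz rule `D(Fu) = Σᵢ (DA⁽ⁱ⁾) ∂ᵢu + Σⱼ A⁽ʲ⁾ D(∂ⱼu)`
has no second-order terms. Eliminating `∂₀u = -Σ_{i≥1} βᵢ eᵢ ∂ᵢu` (from `Du = 0` and `e₀ = 1`)
yields the stated coefficients, using `∂ⱼλᵢ - βᵢ ∂ⱼλ₀ = λ₀ ∂ⱼβᵢ`.
-/

open scoped BigOperators

/-- Partial derivative in the `k`-th coordinate direction. -/
noncomputable def pd {m : ℕ} {F : Type*} [NormedAddCommGroup F] [NormedSpace ℝ F]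
    (k : Fin m) (u : (Fin m → ℝ) → F) (x : Fin m → ℝ) : F :=
  fderiv ℝ u x (Pi.single k 1)

/-- The generalized Cauchy–Riemann operator `Du = Σⱼ λⱼ(x) eⱼ ∂ⱼu` (with `e₀ = 1`). -/
noncomputable def Dop {n : ℕ} {A : Type*} [NormedRing A] [NormedAlgebra ℝ A]
    (lam : Fin (n + 1) → (Fin (n + 1) → ℝ) → ℝ) (e : Fin (n + 1) → A)
    (u : (Fin (n + 1) → ℝ) → A) (x : Fin (n + 1) → ℝ) : A :=
  ∑ j, lam j x • (e j * pd j u x)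

/-- `D` applied to a real-valued function `a`. -/
noncomputable def DopR {n : ℕ} {A : Type*} [NormedRing A] [NormedAlgebra ℝ A]
    (lam : Fin (n + 1) → (Fin (n + 1) → ℝ) → ℝ) (e : Fin (n + 1) → A)
    (a : (Fin (n + 1) → ℝ) → ℝ) (x : Fin (n + 1) → ℝ) : A :=
  ∑ j, (lam j x * pd j a x) • e j

open Filter Topology Finset

section PartialDerivative

variable {m : ℕ} {F : Type*} [NormedAddCommGroup F] [NormedSpace ℝ F] {x : Fin m → ℝ}

lemma pd_congr_of_eventuallyEq {f g : (Fin m → ℝ) → F} (h : f =ᶠ[𝓝 x] g) (k : Fin m) :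
    pd k f x = pd k g x := by
  rw [pd, pd, h.fderiv_eq]

lemma pd_sum {ι : Type*} (s : Finset ι) (k : Fin m) {f : ι → (Fin m → ℝ) → F}
    (hf : ∀ i ∈ s, DifferentiableAt ℝ (f i) x) :
    pd k (fun y => ∑ i ∈ s, f i y) x = ∑ i ∈ s, pd k (f i) x := by
  simp [pd, fderiv_fun_sum hf]

lemma pd_smul (k : Fin m) {a : (Fin m → ℝ) → ℝ} {f : (Fin m → ℝ) → F}
    (ha : DifferentiableAt ℝ a x) (hf : DifferentiableAt ℝ f x) :
    pd k (fun y => a y • f y) x = pd k a x • f x + a x • pd k f x := by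
  simp [pd, fderiv_fun_smul ha hf, add_comm]

lemma pd_const_mul {A : Type*} [NormedRing A] [NormedAlgebra ℝ A] (k : Fin m) (b : A)
    {f : (Fin m → ℝ) → A} (hf : DifferentiableAt ℝ f x) :
    pd k (fun y => b * f y) x = b * pd k f x := by
  simp [pd, fderiv_const_mul hf b]

lemma mul_pd_div (k : Fin m) {f g : (Fin m → ℝ) → ℝ} (hf : DifferentiableAt ℝ f x)
    (hg : DifferentiableAt ℝ g x) (hgx : g x ≠ 0) :
    g x * pd k (fun y => f y / g y) x = pd k f x - f x / g x * pd k g x := by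
  have hfg : (fun y => (f y / g y) • g y) =ᶠ[𝓝 x] f :=
    (hg.continuousAt.eventually_ne hgx).mono fun y hy => div_mul_cancel₀ (f y) hy
  have hdiv : DifferentiableAt ℝ (fun y => f y / g y) x := by
    fun_prop (disch := exact hgx)
  rw [← pd_congr_of_eventuallyEq hfg, pd_smul k hdiv hg, smul_eq_mul, smul_eq_mul]
  field_simp
  ring

lemma differentiableAt_pd {u : (Fin m → ℝ) → F} (hu : ContDiffAt ℝ 2 u x) (k : Fin m) :
    DifferentiableAt ℝ (pd k u) x :=
  ((hu.fderiv_right (m := 1) le_rfl).differentiableAt one_ne_zero).clm_apply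
    (differentiableAt_const _)

lemma pd_pd_comm {u : (Fin m → ℝ) → F} (hu : ContDiffAt ℝ 2 u x) (i j : Fin m) :
    pd j (pd i u) x = pd i (pd j u) x := by
  have hdu : DifferentiableAt ℝ (fderiv ℝ u) x :=
    (hu.fderiv_right (m := 1) le_rfl).differentiableAt one_ne_zero
  have hsymm := hu.isSymmSndFDerivAt (by simp [minSmoothness_of_isRCLikeNormedField])
  change fderiv ℝ (fun y => fderiv ℝ u y (Pi.single i 1)) x (Pi.single j 1) =
    fderiv ℝ (fun y => fderiv ℝ u y (Pi.single j 1)) x (Pi.single i 1)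
  simpa [fderiv_clm_apply hdu (differentiableAt_const _)] using hsymm _ _

end PartialDerivative

lemma Fin.sum_univ_eq_add_sum_Ioi {n : ℕ} {M : Type*} [AddCommMonoid M] (f : Fin (n + 1) → M) :
    ∑ i, f i = f 0 + ∑ i ∈ Ioi 0, f i := by
  rw [add_sum_Ioi_eq_sum_Ici, ← bot_eq_zero, Ici_bot]

lemma sum_mul_eq_sum_Ioi_of_eq_neg {n : ℕ} {R A : Type*} [CommRing R] [Ring A] [Algebra R A]
    {p e : Fin (n + 1) → A} {β : Fin (n + 1) → R}
    (h0 : p 0 = -∑ i ∈ Ioi 0, β i • (e i * p i)) (c : Fin (n + 1) → A) :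
    ∑ i, c i * p i = ∑ i ∈ Ioi 0, (c i - β i • (c 0 * e i)) * p i := by
  rw [Fin.sum_univ_eq_add_sum_Ioi, h0, mul_neg, mul_sum, neg_add_eq_sub, ← sum_sub_distrib]
  refine sum_congr rfl fun i _ => ?_
  rw [sub_mul, mul_smul_comm, smul_mul_assoc, mul_assoc]

section Dirac

variable {n : ℕ} {A : Type*} [NormedRing A] [NormedAlgebra ℝ A]
  {lam : Fin (n + 1) → (Fin (n + 1) → ℝ) → ℝ} {e : Fin (n + 1) → A}
  {u : (Fin (n + 1) → ℝ) → A} {x : Fin (n + 1) → ℝ}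

lemma Dop_sum {ι : Type*} (s : Finset ι) {v : ι → (Fin (n + 1) → ℝ) → A}
    (hv : ∀ i ∈ s, DifferentiableAt ℝ (v i) x) :
    Dop lam e (fun y => ∑ i ∈ s, v i y) x = ∑ i ∈ s, Dop lam e (v i) x := by
  simp only [Dop, pd_sum s _ hv, mul_sum, smul_sum]
  exact sum_comm

lemma Dop_smul {a : (Fin (n + 1) → ℝ) → ℝ} {v : (Fin (n + 1) → ℝ) → A}
    (ha : DifferentiableAt ℝ a x) (hv : DifferentiableAt ℝ v x) :
    Dop lam e (fun y => a y • v y) x = DopR lam e a x * v x + a x • Dop lam e v x := by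
  simp only [Dop, DopR, pd_smul _ ha hv, mul_add, smul_add, sum_add_distrib, sum_mul, smul_sum,
    mul_smul_comm, smul_mul_assoc, smul_smul, mul_comm (a x)]

lemma pd_Dop (hu : ContDiffAt ℝ 2 u x) (hlam : ∀ k, DifferentiableAt ℝ (lam k) x)
    (i : Fin (n + 1)) :
    pd i (Dop lam e u) x = ∑ k, pd i (lam k) x • (e k * pd k u x) + Dop lam e (pd i u) x := by
  have hterm : ∀ k ∈ univ, DifferentiableAt ℝ (fun y => lam k y • (e k * pd k u y)) x :=
    fun k _ => (hlam k).smul ((differentiableAt_pd hu k).const_mul (e k))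
  change pd i (fun y => ∑ k, lam k y • (e k * pd k u y)) x = _
  rw [pd_sum _ _ hterm, Dop, ← sum_add_distrib]
  refine sum_congr rfl fun k _ => ?_
  rw [pd_smul _ (hlam k) ((differentiableAt_pd hu k).const_mul (e k)),
    pd_const_mul _ _ (differentiableAt_pd hu k), pd_pd_comm hu]

lemma Dop_pd_of_Dop_eq_zero (hu : ContDiffAt ℝ 2 u x) (hlam : ∀ k, DifferentiableAt ℝ (lam k) x)
    (hD : Dop lam e u =ᶠ[𝓝 x] 0) (i : Fin (n + 1)) :
    Dop lam e (pd i u) x = -∑ k, pd i (lam k) x • (e k * pd k u x) := by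
  have h := pd_Dop (e := e) hu hlam i
  rw [pd_congr_of_eventuallyEq hD, pd, fderiv_zero, Pi.zero_apply, zero_apply] at h
  exact (neg_eq_of_add_eq_zero_right h.symm).symm

lemma pd_zero_eq_of_Dop_eq_zero (he0 : e 0 = 1) (hl0 : lam 0 x ≠ 0) (hD : Dop lam e u x = 0) :
    pd 0 u x = -∑ i ∈ Ioi 0, (lam i x / lam 0 x) • (e i * pd i u x) := by
  rw [Dop, Fin.sum_univ_eq_add_sum_Ioi, he0, one_mul] at hD
  rw [← inv_smul_smul₀ hl0 (pd 0 u x), eq_neg_of_add_eq_zero_left hD, smul_neg, smul_sum]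
  simp only [smul_smul, inv_mul_eq_div]

lemma sum_pd_lam_smul_eq_of_Dop_eq_zero (he0 : e 0 = 1) (hlam : ∀ k, DifferentiableAt ℝ (lam k) x)
    (hl0 : lam 0 x ≠ 0) (hD : Dop lam e u x = 0) (j : Fin (n + 1)) :
    ∑ k, pd j (lam k) x • (e k * pd k u x) =
      ∑ i ∈ Ioi 0, (lam 0 x * pd j (fun y => lam i y / lam 0 y) x) • (e i * pd i u x) := by
  simp only [← smul_mul_assoc]
  rw [sum_mul_eq_sum_Ioi_of_eq_neg (pd_zero_eq_of_Dop_eq_zero he0 hl0 hD)]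
  refine sum_congr rfl fun i _ => ?_
  rw [mul_pd_div j (hlam i) (hlam 0) hl0, he0, smul_one_mul, smul_smul, ← sub_smul,
    smul_mul_assoc, mul_comm (lam i x / lam 0 x)]

end Dirac

theorem Dop_F_eq_first_order_general {n : ℕ} {A : Type*}
    [NormedRing A] [NormedAlgebra ℝ A]
    (e : Fin (n + 1) → A) (he0 : e 0 = 1)
    (lam : Fin (n + 1) → (Fin (n + 1) → ℝ) → ℝ)
    (hlam : ∀ j, ContDiff ℝ 1 (lam j))
    (Ω : Set (Fin (n + 1) → ℝ)) (hΩ : IsOpen Ω)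
    (hlam0 : ∀ x ∈ Ω, lam 0 x ≠ 0)
    (Aco : Fin (n + 1) → (Fin (n + 1) → ℝ) → ℝ)
    (hAco : ∀ i, ContDiff ℝ 1 (Aco i))
    (u : (Fin (n + 1) → ℝ) → A) (hu : ContDiffOn ℝ 2 u Ω)
    (hmono : ∀ x ∈ Ω, Dop lam e u x = 0) :
    ∀ x ∈ Ω,
      Dop lam e (fun y => ∑ i, Aco i y • pd i u y) x =
        (∑ i ∈ Finset.Ioi (0 : Fin (n + 1)),
          ((DopR lam e (Aco i) x
            - (lam i x / lam 0 x) • (DopR lam e (Aco 0) x * e i)) * pd i u x))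
        - (∑ i ∈ Finset.Ioi (0 : Fin (n + 1)), ∑ j,
            (Aco j x * lam 0 x * pd j (fun y => lam i y / lam 0 y) x) •
              (e i * pd i u x)) := by
  intro x hx
  have hΩx : Ω ∈ 𝓝 x := hΩ.mem_nhds hx
  have hu2 : ContDiffAt ℝ 2 u x := (hu x hx).contDiffAt hΩx
  have hlamx : ∀ k, DifferentiableAt ℝ (lam k) x :=
    fun k => ((hlam k).differentiable one_ne_zero).differentiableAt
  have hAcox : ∀ i, DifferentiableAt ℝ (Aco i) x :=
    fun i => ((hAco i).differentiable one_ne_zero).differentiableAt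
  have hD : Dop lam e u =ᶠ[𝓝 x] 0 := eventually_of_mem hΩx hmono
  rw [Dop_sum (v := fun i y => Aco i y • pd i u y) univ
    fun i _ => (hAcox i).smul (differentiableAt_pd hu2 i)]
  simp only [Dop_smul (hAcox _) (differentiableAt_pd hu2 _), sum_add_distrib,
    Dop_pd_of_Dop_eq_zero hu2 hlamx hD,
    sum_pd_lam_smul_eq_of_Dop_eq_zero he0 hlamx (hlam0 x hx) (hmono x hx)]
  rw [sum_mul_eq_sum_Ioi_of_eq_neg (pd_zero_eq_of_Dop_eq_zero he0 (hlam0 x hx) (hmono x hx)),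
    sum_comm, sub_eq_add_neg]
  simp only [smul_neg, smul_sum, smul_smul, mul_assoc, sum_neg_distrib]

/-- For a C² monogenic `u` (`Du = 0`) and `Fu = Σᵢ A⁽ⁱ⁾(x)∂ᵢu` with real C¹
coefficients, `D(Fu)` is the displayed linear combination of first-order
derivatives of `u`:
`D(Fu) = Σ_{i≥1}(DA⁽ⁱ⁾ - DA⁽⁰⁾βᵢeᵢ)∂ᵢu - Σ_{i≥1}Σⱼ A⁽ʲ⁾λ₀∂ⱼ(βᵢ)eᵢ∂ᵢu`. -/
theorem Dop_F_eq_first_order {n : ℕ} {A : Type*}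
    [NormedRing A] [NormedAlgebra ℝ A] [FiniteDimensional ℝ A]
    (α : Fin (n + 1) → ℝ) (γ : Fin (n + 1) → Fin (n + 1) → ℝ)
    (e : Fin (n + 1) → A) (he0 : e 0 = 1)
    (hsq : ∀ j, j ≠ 0 → e j * e j = algebraMap ℝ A (-(α j)))
    (hanti : ∀ i j, i ≠ 0 → j ≠ 0 → i ≠ j →
      e i * e j + e j * e i = algebraMap ℝ A (2 * γ i j))
    (lam : Fin (n + 1) → (Fin (n + 1) → ℝ) → ℝ)
    (hlam : ∀ j, ContDiff ℝ 1 (lam j))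
    (Ω : Set (Fin (n + 1) → ℝ)) (hΩ : IsOpen Ω)
    (hlam0 : ∀ x ∈ Ω, lam 0 x ≠ 0)
    (Aco : Fin (n + 1) → (Fin (n + 1) → ℝ) → ℝ)
    (hAco : ∀ i, ContDiff ℝ 1 (Aco i))
    (u : (Fin (n + 1) → ℝ) → A) (hu : ContDiffOn ℝ 2 u Ω)
    (hmono : ∀ x ∈ Ω, Dop lam e u x = 0) :
    ∀ x ∈ Ω,
      Dop lam e (fun y => ∑ i, Aco i y • pd i u y) x =
        (∑ i ∈ Finset.Ioi (0 : Fin (n + 1)),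
          ((DopR lam e (Aco i) x
            - (lam i x / lam 0 x) • (DopR lam e (Aco 0) x * e i)) * pd i u x))
        - (∑ i ∈ Finset.Ioi (0 : Fin (n + 1)), ∑ j,
            (Aco j x * lam 0 x * pd j (fun y => lam i y / lam 0 y) x) •
              (e i * pd i u x)) :=
  Dop_F_eq_first_order_general e he0 lam hlam Ω hΩ hlam0 Aco hAco u hu hmono
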